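/- arXiv:1408.3708 — 5 statements merged into one kernel-verified Lean document; each statement's English description precedes it below -/
import Mathlib

section
/- Let N ≥ 1 and r ≥ 1 be integers and let x = x₁ + ⋯ + x_r. Define polynomials A_r^{(N)}(i, x; s) ∈ ℚ[x, s] (for 0 ≤ i ≤ r − 1) by the recurrence A_1^{(N)}(0, x; s) = 1 and, for r ≥ 2, A_r^{(N)}(i, x; s) = ((s − 1)/(r − 1))·A_{r−1}^{(N)}(i, x; s − N) − ((x − (r − 1))/(r − 1))·A_{r−1}^{(N)}(i − 1, x; s − N + 1), where A_r^{(N)}(i, x; s) is defined to be 0 for i ≤ −1 and for i ≥ r. Then for every integer n ≥ r − 1 and all rational numbers x₁, …, x_r, one has ∑_{i₁,…,i_r ≥ 0, i₁+⋯+i_r = n} (n!/(i₁!⋯i_r!)) B_{N,i₁}(x₁) ⋯ B_{N,i_r}(x_r) = (1/N^{r−1}) ∑_{i=0}^{r−1} A_r^{(N)}(i, x; 1 + N(r−1) − n) · (−1)^i · C(n, i) · i! · B_{N,n−i}(x), where x = x₁ + ⋯ + x_r. -/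
/-!
Both sides are coefficients of exponential generating functions in `ℚ⟦t⟧`. Put
`E = e^t - T_{N-1}(t)`. The hypothesis on `B` says `(∑ B_{N,n}(c) tⁿ/n!) · E = t^N e^{ct}/N!`,
so the generating function `G_r` of the left side satisfies `G_r E^r = t^{Nr} e^{xt}/N!^r`.
Differentiating this and using `t E' = t E + N t^N/N!` shows that
`r N G_{r+1} = (N r - t d/dt + (x - r) t) G_r`. The recurrence defining `A_r` gives the same
recurrence for the generating function of `N^{r-1}` times the right side, and both agree for
`r = 1`. Since `E ≠ 0` in the domain `ℚ⟦t⟧`, the two products with `E^r` determine them.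
-/

open Finset

/-- The polynomials `A_r^{(N)}(i, x; s)` of Theorem 2 (sums of products of hypergeometric
Bernoulli polynomials), realized as functions of `x` and `s`.  They satisfy
`A_1^{(N)}(0,x;s) = 1`, vanish for `i ≤ -1` and `i ≥ r`, and obey the recurrence
`A_r^{(N)}(i,x;s) = ((s-1)/(r-1))·A_{r-1}^{(N)}(i,x;s-N)
  - ((x-(r-1))/(r-1))·A_{r-1}^{(N)}(i-1,x;s-N+1)` for `r ≥ 2`. -/
noncomputable def hgA (N : ℕ) : ℕ → ℤ → ℚ → ℚ → ℚ
  | 0, _, _, _ => 0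
  | 1, i, _, _ => if i = 0 then 1 else 0
  | (r + 2), i, x, s =>
      ((s - 1) / ((r : ℚ) + 1)) * hgA N (r + 1) i x (s - N)
        - ((x - ((r : ℚ) + 1)) / ((r : ℚ) + 1)) * hgA N (r + 1) (i - 1) x (s - N + 1)

open PowerSeries
open scoped Nat

namespace PowerSeries

section CommSemiring

variable {R : Type*} [CommSemiring R]

theorem coeff_X_mul_derivative (f : R⟦X⟧) (n : ℕ) :
    coeff n (X * d⁄dX R f) = n * coeff n f := by
  cases n with
  | zero => simp
  | succ k => rw [coeff_succ_X_mul, coeff_derivative]; push_cast; ring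

theorem X_mul_derivative_X_pow (k : ℕ) : X * d⁄dX R (X ^ k : R⟦X⟧) = C (k : R) * X ^ k := by
  ext n
  rw [coeff_X_mul_derivative, coeff_C_mul, coeff_X_pow]
  rcases eq_or_ne n k with rfl | h
  · simp
  · simp [h]

theorem derivative_rescale (a : R) (f : R⟦X⟧) :
    d⁄dX R (rescale a f) = C a * rescale a (d⁄dX R f) := by
  ext n
  simp only [coeff_derivative, coeff_C_mul, coeff_rescale]
  ring

theorem coeff_prod_eq_sum_antidiagonalTuple {r : ℕ} (f : Fin r → R⟦X⟧) (n : ℕ) :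
    coeff n (∏ j, f j) = ∑ l ∈ Nat.antidiagonalTuple r n, ∏ j, coeff (l j) (f j) := by
  rw [coeff_prod]
  refine sum_nbij' (⇑) Finsupp.equivFunOnFinite.symm (fun l hl => ?_) (fun l hl => ?_)
    (fun l _ => Finsupp.equivFunOnFinite.symm_apply_apply l)
    (fun l _ => Finsupp.equivFunOnFinite.apply_symm_apply l) (fun _ _ => rfl)
  · rw [mem_finsuppAntidiag] at hl
    exact Nat.mem_antidiagonalTuple.mpr hl.1
  · rw [Nat.mem_antidiagonalTuple] at hl
    exact mem_finsuppAntidiag.mpr ⟨hl, subset_univ _⟩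

end CommSemiring

section Field

variable {K : Type*} [Field K]

noncomputable def egf (u : ℕ → K) : K⟦X⟧ := mk fun n => u n / n !

theorem coeff_egf (u : ℕ → K) (n : ℕ) : coeff n (egf u) = u n / n ! := coeff_mk _ _

theorem coeff_X_mul_egf [CharZero K] (u : ℕ → K) (n : ℕ) :
    coeff n (X * egf u) = n * u (n - 1) / n ! := by
  cases n with
  | zero => simp
  | succ k =>
    rw [coeff_succ_X_mul, coeff_egf, Nat.factorial_succ]
    push_cast
    field_simp

end Field

end PowerSeries

noncomputable def expTail (N : ℕ) : ℚ⟦X⟧ := exp ℚ - trunc N (exp ℚ)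

theorem coeff_expTail (N m : ℕ) :
    coeff m (expTail N) = if N ≤ m then (m ! : ℚ)⁻¹ else 0 := by
  rw [expTail, map_sub, Polynomial.coeff_coe, coeff_trunc, coeff_exp]
  split_ifs <;> first | omega | simp

theorem expTail_ne_zero (N : ℕ) : expTail N ≠ 0 := fun h => by
  simpa [coeff_expTail, Nat.factorial_ne_zero] using congrArg (coeff N) h

theorem X_mul_derivative_expTail {N : ℕ} (hN : 1 ≤ N) :
    X * d⁄dX ℚ (expTail N) = X * expTail N + C (N : ℚ) * (C (N ! : ℚ)⁻¹ * X ^ N) := by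
  ext n
  rw [coeff_X_mul_derivative, map_add, coeff_C_mul, coeff_C_mul, coeff_X_pow, coeff_expTail]
  cases n with
  | zero => simp; omega
  | succ k =>
    rw [coeff_succ_X_mul, coeff_expTail, Nat.factorial_succ]
    rcases lt_trichotomy (k + 1) N with h | rfl | h
    · simp [show ¬N ≤ k + 1 by omega, show ¬N ≤ k by omega, h.ne]
    · simp [Nat.factorial_succ]
    · rw [if_pos h.le, if_pos (by omega), if_neg (by omega), mul_zero, mul_zero, add_zero]
      push_cast
      field_simp

noncomputable def hgNumerator (N r : ℕ) (x : ℚ) : ℚ⟦X⟧ :=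
  C ((N ! : ℚ)⁻¹ ^ r) * X ^ (N * r) * rescale x (exp ℚ)

theorem hgNumerator_zero (N : ℕ) : hgNumerator N 0 0 = 1 := by
  simp [hgNumerator, rescale_zero]

theorem hgNumerator_mul (N r s : ℕ) (x y : ℚ) :
    hgNumerator N r x * hgNumerator N s y = hgNumerator N (r + s) (x + y) := by
  simp only [hgNumerator, ← exp_mul_exp_eq_exp_add, mul_add, pow_add, map_mul]
  ring

theorem C_mul_X_pow_mul_hgNumerator (N r : ℕ) (x : ℚ) :
    C (N ! : ℚ)⁻¹ * X ^ N * hgNumerator N r x = hgNumerator N (r + 1) x := by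
  simp only [hgNumerator, mul_add, pow_add, pow_one, mul_one, map_mul]
  ring

theorem prod_hgNumerator {ι : Type*} (N : ℕ) (s : Finset ι) (x : ι → ℚ) :
    ∏ j ∈ s, hgNumerator N 1 (x j) = hgNumerator N s.card (∑ j ∈ s, x j) := by
  induction s using Finset.cons_induction with
  | empty => simp [hgNumerator_zero]
  | cons j s hj ih => rw [prod_cons, sum_cons, card_cons, ih, hgNumerator_mul, add_comm 1]

theorem X_mul_derivative_hgNumerator (N r : ℕ) (x : ℚ) :
    X * d⁄dX ℚ (hgNumerator N r x) = (C ((N * r : ℕ) : ℚ) + C x * X) * hgNumerator N r x := by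
  have hX := X_mul_derivative_X_pow (R := ℚ) (N * r)
  simp only [hgNumerator, Derivation.leibniz, derivative_C, derivative_rescale, derivative_exp,
    smul_eq_mul, mul_zero]
  linear_combination (C ((N ! : ℚ)⁻¹ ^ r) * rescale x (exp ℚ)) * hX

theorem mul_expTail_pow_succ_of_mul_expTail_pow {N : ℕ} (hN : 1 ≤ N) (r : ℕ) (x : ℚ) {P T : ℚ⟦X⟧}
    (hT : X * d⁄dX ℚ T = (C ((N * (r + 1) : ℕ) : ℚ) + C x * X) * T)
    (hP : P * expTail N ^ (r + 1) = T) :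
    (C ((N * (r + 1) : ℕ) : ℚ) * P - X * d⁄dX ℚ P + C (x - (r + 1 : ℕ)) * X * P)
        * expTail N ^ (r + 2)
      = C ((N * (r + 1) : ℕ) : ℚ) * (C (N ! : ℚ)⁻¹ * X ^ N * T) := by
  have hE := X_mul_derivative_expTail hN
  set E := expTail N
  have hPE : X * d⁄dX ℚ (P * E ^ (r + 1))
      = X * d⁄dX ℚ P * E ^ (r + 1) + C ((r + 1 : ℕ) : ℚ) * P * E ^ r * (X * d⁄dX ℚ E) := by
    rw [Derivation.leibniz, Derivation.leibniz_pow, Nat.add_sub_cancel, smul_eq_mul, smul_eq_mul,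
      nsmul_eq_mul, map_natCast]
    ring
  rw [hP, hT] at hPE
  simp only [map_natCast, map_sub] at hPE hE ⊢
  push_cast at hPE hE ⊢
  linear_combination E * hPE + ((r + 1 : ℚ⟦X⟧) * P * E ^ (r + 1)) * hE
    + ((N * (r + 1) + C x * X) * E + N * (r + 1) * C (N ! : ℚ)⁻¹ * X ^ N) * hP

def IsHypergeometricBernoulli (N : ℕ) (B : ℕ → Polynomial ℚ) : Prop :=
  ∀ m : ℕ, ∑ k ∈ Finset.range (m + 1),
        (if N ≤ m - k then ((k.factorial * (m - k).factorial : ℚ))⁻¹ • B k else 0)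
      = if N ≤ m then ((N.factorial * (m - N).factorial : ℚ))⁻¹ • (Polynomial.X ^ (m - N))
        else 0

theorem egf_eval_mul_expTail {N : ℕ} {B : ℕ → Polynomial ℚ} (hB : IsHypergeometricBernoulli N B)
    (c : ℚ) : egf (fun n => (B n).eval c) * expTail N = hgNumerator N 1 c := by
  ext m
  have h := congrArg (Polynomial.eval c) (hB m)
  simp only [Polynomial.eval_finsetSum, apply_ite (Polynomial.eval c), Polynomial.eval_smul,
    Polynomial.eval_zero, Polynomial.eval_pow, Polynomial.eval_X, smul_eq_mul] at h
  rw [coeff_mul, Nat.sum_antidiagonal_eq_sum_range_succ_mk, hgNumerator, pow_one, mul_one,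
    mul_assoc, coeff_C_mul, coeff_X_pow_mul']
  calc ∑ k ∈ range (m + 1), coeff k (egf fun n => (B n).eval c) * coeff (m - k) (expTail N)
      = ∑ k ∈ range (m + 1),
          if N ≤ m - k then (k ! * (m - k)! : ℚ)⁻¹ * (B k).eval c else 0 := by
        refine sum_congr rfl fun k _ => ?_
        rw [coeff_egf, coeff_expTail, mul_ite, mul_zero, mul_inv]
        split_ifs
        · ring
        · rfl
    _ = _ := by
        rw [h]
        split_ifs
        · rw [coeff_rescale, coeff_exp, mul_inv]
          simp only [one_div, eq_ratCast, Rat.cast_id]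
          ring
        · simp

theorem prod_egf_eval_mul_expTail_pow {N : ℕ} {B : ℕ → Polynomial ℚ}
    (hB : IsHypergeometricBernoulli N B) {ι : Type*} [Fintype ι] (x : ι → ℚ) :
    (∏ j, egf (fun n => (B n).eval (x j))) * expTail N ^ Fintype.card ι
      = hgNumerator N (Fintype.card ι) (∑ j, x j) := by
  rw [← card_univ, ← prod_const, ← prod_mul_distrib]
  simp only [egf_eval_mul_expTail hB]
  exact prod_hgNumerator N univ x

section Coefficients

variable (N : ℕ)

theorem hgA_eq_zero_of_neg : ∀ (r : ℕ) {i : ℤ}, i < 0 → ∀ x s, hgA N r i x s = 0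
  | 0, _, _, _, _ => rfl
  | 1, i, hi, _, _ => if_neg hi.ne
  | r + 2, i, hi, x, s => by
    rw [hgA, hgA_eq_zero_of_neg (r + 1) hi, hgA_eq_zero_of_neg (r + 1) (by omega)]
    ring

theorem hgA_eq_zero_of_le : ∀ (r : ℕ) {i : ℤ}, r ≤ i → ∀ x s, hgA N r i x s = 0
  | 0, _, _, _, _ => rfl
  | 1, i, hi, _, _ => if_neg (by omega)
  | r + 2, i, hi, x, s => by
    rw [hgA, hgA_eq_zero_of_le (r + 1) (by omega), hgA_eq_zero_of_le (r + 1) (by omega)]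
    ring

theorem sum_range_hgA_mul (r : ℕ) (x s : ℚ) (g : ℕ → ℚ) :
    ∑ i ∈ range (r + 2), hgA N (r + 2) i x s * g i
      = (s - 1) / (r + 1) * ∑ i ∈ range (r + 1), hgA N (r + 1) i x (s - N) * g i
        - (x - (r + 1)) / (r + 1)
          * ∑ i ∈ range (r + 1), hgA N (r + 1) i x (s - N + 1) * g (i + 1) := by
  simp only [hgA, sub_mul, mul_assoc, sum_sub_distrib, ← mul_sum]
  rw [sum_range_succ _ (r + 1), hgA_eq_zero_of_le N (r + 1) le_rfl,
    sum_range_succ' _ (r + 1), Nat.cast_zero, zero_sub, hgA_eq_zero_of_neg N (r + 1) (by omega)]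
  push_cast
  simp only [zero_mul, add_zero, add_sub_cancel_right]

variable (B : ℕ → Polynomial ℚ) (x : ℚ)

/-- The right side of the theorem is `hgSum N B x r (1 + N (r - 1) - n) n / N^{r-1}`, since
`C(n, i) i! = n.descFactorial i`. -/
noncomputable def hgSum (r : ℕ) (s : ℚ) (n : ℕ) : ℚ :=
  ∑ i ∈ range r, hgA N r i x s * ((-1) ^ i * n.descFactorial i * (B (n - i)).eval x)

theorem hgSum_add_two (r : ℕ) (s : ℚ) (n : ℕ) :
    (r + 1) * hgSum N B x (r + 2) (s + N) n
      = (s + N - 1) * hgSum N B x (r + 1) s n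
        + n * (x - (r + 1)) * hgSum N B x (r + 1) (s + 1) (n - 1) := by
  have hshift : ∀ i, (-1) ^ (i + 1) * (n.descFactorial (i + 1) : ℚ) * (B (n - (i + 1))).eval x
      = -n * ((-1) ^ i * ((n - 1).descFactorial i : ℚ) * (B (n - 1 - i)).eval x) := by
    intro i
    cases n with
    | zero => simp
    | succ k =>
      rw [Nat.succ_descFactorial_succ, Nat.add_sub_cancel, Nat.add_sub_add_right]
      push_cast
      ring
  simp only [hgSum, sum_range_hgA_mul, hshift, mul_left_comm _ (-(n : ℚ)), ← mul_sum,
    add_sub_cancel_right]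
  field_simp
  ring

noncomputable def hgSumEGF (r : ℕ) : ℚ⟦X⟧ :=
  egf fun n => hgSum N B x r (1 + N * ((r : ℚ) - 1) - n) n

theorem hgSumEGF_one : hgSumEGF N B x 1 = egf fun n => (B n).eval x := by
  simp [hgSumEGF, hgSum, hgA]

theorem hgSumEGF_add_two (r : ℕ) :
    C ((r + 1 : ℕ) : ℚ) * hgSumEGF N B x (r + 2)
      = C ((N * (r + 1) : ℕ) : ℚ) * hgSumEGF N B x (r + 1) - X * d⁄dX ℚ (hgSumEGF N B x (r + 1))
        + C (x - (r + 1 : ℕ)) * X * hgSumEGF N B x (r + 1) := by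
  ext n
  rw [map_add, map_sub, coeff_C_mul, coeff_C_mul, coeff_X_mul_derivative, mul_assoc, coeff_C_mul]
  simp only [hgSumEGF, coeff_X_mul_egf, coeff_egf]
  have hrec := hgSum_add_two N B x r (1 + N * ((r + 1 : ℕ) - 1) - n) n
  have hpred : (n : ℚ) * hgSum N B x (r + 1) (1 + N * ((r + 1 : ℕ) - 1) - n + 1) (n - 1)
      = n * hgSum N B x (r + 1) (1 + N * ((r + 1 : ℕ) - 1) - (n - 1 : ℕ)) (n - 1) := by
    rcases n with _ | n
    · simp
    · push_cast
      ring_nf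
  rw [show (1 + N * ((r + 2 : ℕ) - 1) - n : ℚ) = 1 + N * ((r + 1 : ℕ) - 1) - n + N by
    push_cast; ring]
  push_cast at hrec hpred ⊢
  linear_combination (hrec + (x - (r + 1)) * hpred) / (n ! : ℚ)

variable {N B}

theorem hgSumEGF_mul_expTail_pow (hN : 1 ≤ N) (hB : IsHypergeometricBernoulli N B) (r : ℕ) :
    hgSumEGF N B x (r + 1) * expTail N ^ (r + 1) = C ((N : ℚ) ^ r) * hgNumerator N (r + 1) x := by
  induction r with
  | zero =>
    rw [hgSumEGF_one, zero_add, pow_one, egf_eval_mul_expTail hB, pow_zero, map_one, one_mul]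
  | succ r ih =>
    have hT : X * d⁄dX ℚ (C ((N : ℚ) ^ r) * hgNumerator N (r + 1) x)
        = (C ((N * (r + 1) : ℕ) : ℚ) + C x * X) * (C ((N : ℚ) ^ r) * hgNumerator N (r + 1) x) := by
      rw [Derivation.leibniz, derivative_C, smul_zero, add_zero, smul_eq_mul, mul_left_comm,
        X_mul_derivative_hgNumerator]
      ring
    have hstep := mul_expTail_pow_succ_of_mul_expTail_pow hN r x hT ih
    rw [← hgSumEGF_add_two, mul_left_comm _ (C _), C_mul_X_pow_mul_hgNumerator] at hstep
    have hr : C ((r + 1 : ℕ) : ℚ) ≠ 0 := (map_ne_zero_iff C C_injective).mpr (by positivity)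
    apply mul_left_cancel₀ hr
    simp only [map_natCast, map_pow] at hstep ⊢
    push_cast at hstep ⊢
    linear_combination hstep

theorem hgSum_eq_sum_antidiagonalTuple (hN : 1 ≤ N) (hB : IsHypergeometricBernoulli N B) {r : ℕ}
    (x : Fin (r + 1) → ℚ) (n : ℕ) :
    hgSum N B (∑ j, x j) (r + 1) (1 + N * ((r + 1 : ℕ) - 1) - n) n
      = N ^ r * ∑ iv ∈ Nat.antidiagonalTuple (r + 1) n,
          ((n ! : ℚ) / ∏ j, ((iv j)! : ℚ)) * ∏ j, (B (iv j)).eval (x j) := by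
  have hEGF : hgSumEGF N B (∑ j, x j) (r + 1)
      = C ((N : ℚ) ^ r) * ∏ j, egf fun k => (B k).eval (x j) := by
    have hprod := prod_egf_eval_mul_expTail_pow hB x
    rw [Fintype.card_fin] at hprod
    refine mul_right_cancel₀ (pow_ne_zero (r + 1) (expTail_ne_zero N)) ?_
    rw [hgSumEGF_mul_expTail_pow _ hN hB, mul_assoc, hprod]
  have hcoeff := congrArg (coeff n) hEGF
  simp only [hgSumEGF, coeff_egf, coeff_C_mul, coeff_prod_eq_sum_antidiagonalTuple] at hcoeff
  rw [div_eq_iff (by positivity)] at hcoeff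
  rw [hcoeff, mul_sum, mul_sum, sum_mul]
  refine sum_congr rfl fun iv _ => ?_
  rw [prod_div_distrib]
  ring

end Coefficients

theorem sum_products_hypergeometric_bernoulli_polynomials_general
    (N r : ℕ) (hN : 1 ≤ N) (hr : 1 ≤ r) (n : ℕ)
    (x : Fin r → ℚ) (B : ℕ → Polynomial ℚ)
    (hB : ∀ m : ℕ, ∑ k ∈ Finset.range (m + 1),
        (if N ≤ m - k then ((k.factorial * (m - k).factorial : ℚ))⁻¹ • B k else 0)
      = if N ≤ m then ((N.factorial * (m - N).factorial : ℚ))⁻¹ • (Polynomial.X ^ (m - N))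
        else 0) :
    ∑ iv ∈ Finset.Nat.antidiagonalTuple r n,
        ((n.factorial : ℚ) / ∏ j, ((iv j).factorial : ℚ)) * ∏ j, (B (iv j)).eval (x j)
      = (1 / (N : ℚ) ^ (r - 1)) * ∑ i ∈ Finset.range r,
          hgA N r (i : ℤ) (∑ j, x j) (1 + (N : ℚ) * ((r : ℚ) - 1) - (n : ℚ))
            * (-1) ^ i * (n.choose i : ℚ) * (i.factorial : ℚ)
            * (B (n - i)).eval (∑ j, x j) := by
  obtain ⟨r, rfl⟩ : ∃ r', r = r' + 1 := ⟨r - 1, by omega⟩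
  have hrhs : ∑ i ∈ range (r + 1),
        hgA N (r + 1) i (∑ j, x j) (1 + N * ((r + 1 : ℕ) - 1) - n) * (-1) ^ i * (n.choose i : ℚ)
          * (i ! : ℚ) * (B (n - i)).eval (∑ j, x j)
      = hgSum N B (∑ j, x j) (r + 1) (1 + N * ((r + 1 : ℕ) - 1) - n) n := by
    refine sum_congr rfl fun i _ => ?_
    rw [Nat.descFactorial_eq_factorial_mul_choose]
    push_cast
    ring
  rw [hrhs, hgSum_eq_sum_antidiagonalTuple hN hB, Nat.add_sub_cancel]
  field_simp

/-- Theorem 2: sums of products of hypergeometric Bernoulli polynomials.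
Here `B n` is the hypergeometric Bernoulli polynomial `B_{N,n}(x)`, characterized by the
coefficient relations coming from the generating function
`(t^N e^{xt}/N!)/(e^t - T_{N-1}(t)) = ∑ B_{N,n}(x) t^n/n!`. -/
theorem sum_products_hypergeometric_bernoulli_polynomials
    (N r : ℕ) (hN : 1 ≤ N) (hr : 1 ≤ r) (n : ℕ) (hn : r - 1 ≤ n)
    (x : Fin r → ℚ) (B : ℕ → Polynomial ℚ)
    (hB : ∀ m : ℕ, ∑ k ∈ Finset.range (m + 1),
        (if N ≤ m - k then ((k.factorial * (m - k).factorial : ℚ))⁻¹ • B k else 0)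
      = if N ≤ m then ((N.factorial * (m - N).factorial : ℚ))⁻¹ • (Polynomial.X ^ (m - N))
        else 0) :
    ∑ iv ∈ Finset.Nat.antidiagonalTuple r n,
        ((n.factorial : ℚ) / ∏ j, ((iv j).factorial : ℚ)) * ∏ j, (B (iv j)).eval (x j)
      = (1 / (N : ℚ) ^ (r - 1)) * ∑ i ∈ Finset.range r,
          hgA N r (i : ℤ) (∑ j, x j) (1 + (N : ℚ) * ((r : ℚ) - 1) - (n : ℚ))
            * (-1) ^ i * (n.choose i : ℚ) * (i.factorial : ℚ)
            * (B (n - i)).eval (∑ j, x j) :=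
  sum_products_hypergeometric_bernoulli_polynomials_general N r hN hr n x B hB
end

section
/- Let N ≥ 1, r ≥ 1 and n ≥ 1 be integers and let y = B_{N,n}^{(r)}(x) ∈ ℚ[x] be the n-th higher order hypergeometric Bernoulli polynomial. Then y satisfies the differential equation ∑_{k=2}^{n} (B_{N,k}/k!) · y^{(k)}(x) − (x/(rN) − 1/(N(N+1))) · y′(x) + (n/(rN)) · y(x) = 0, i.e. (B_{N,n}/n!) y^{(n)} + (B_{N,n−1}/(n−1)!) y^{(n−1)} + ⋯ + (B_{N,2}/2!) y″ − (x/(rN) − 1/(N(N+1))) y′ + (n/(rN)) y = 0 as an identity of polynomials in ℚ[x]. -/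
/-!
Clearing the denominator `t^N` in `F · (e^t - T_{N-1}(t)) = t^N / N!` and differentiating shows
that `F` satisfies the Riccati equation `t F' = N F - t F - N F²`. Hence `G = F^r e^{xt}` satisfies
`t ∂_t G = r (N G - t G - N F G) + x t G`. On the coefficients of `G`, multiplication by `t` acts
as `d/dx`, so comparing coefficients of `t^n` gives the differential equation once the first two
hypergeometric Bernoulli numbers `B_{N,0} = 1` and `B_{N,1} = -1/(N+1)` are known; the second one
is read off from the Riccati equation.
-/

open Finset Polynomial PowerSeries

open scoped Nat

lemma PowerSeries.map_derivative {R S : Type*} [CommSemiring R] [CommSemiring S] (f : R →+* S)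
    (g : R⟦X⟧) : PowerSeries.map f (d⁄dX R g) = d⁄dX S (PowerSeries.map f g) := by
  ext j
  simp [PowerSeries.coeff_derivative]

lemma PowerSeries.coeff_X_mul_derivative_s5 {R : Type*} [CommSemiring R] (f : R⟦X⟧) (n : ℕ) :
    PowerSeries.coeff n (PowerSeries.X * d⁄dX R f) = n * PowerSeries.coeff n f := by
  cases n with
  | zero => simp
  | succ m => rw [coeff_succ_X_mul, PowerSeries.coeff_derivative, mul_comm, Nat.cast_succ]

lemma X_mul_derivative_pow_mul {A : Type*} [CommRing A] {F E : A⟦X⟧} {c a : A}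
    (hF : PowerSeries.X * d⁄dX A F
      = PowerSeries.C c * F - PowerSeries.X * F - PowerSeries.C c * F ^ 2)
    (hE : d⁄dX A E = PowerSeries.C a * E) (r : ℕ) :
    PowerSeries.X * d⁄dX A (F ^ r * E) = r • (PowerSeries.C c * (F ^ r * E)
      - PowerSeries.X * (F ^ r * E) - PowerSeries.C c * (F * (F ^ r * E)))
      + PowerSeries.C a * (PowerSeries.X * (F ^ r * E)) := by
  rw [Derivation.leibniz, PowerSeries.derivative_pow, smul_eq_mul, smul_eq_mul]
  cases r with
  | zero => linear_combination PowerSeries.X * hE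
  | succ s =>
    rw [Nat.add_sub_cancel, nsmul_eq_mul]
    push_cast
    linear_combination PowerSeries.X * F ^ (s + 1) * hE + ((s : A⟦X⟧) + 1) * F ^ s * E * hF

lemma Finset.sum_range_succ_succ_eq_add_add_sum_Icc {M : Type*} [AddCommMonoid M] (f : ℕ → M)
    (m : ℕ) : ∑ k ∈ range (m + 2), f k = f 0 + f 1 + ∑ k ∈ Icc 2 (m + 1), f k := by
  rw [Finset.range_eq_Ico, Finset.sum_eq_sum_Ico_succ_bot (by omega),
    Finset.sum_eq_sum_Ico_succ_bot (by omega), ← add_assoc, ← Finset.Ico_add_one_right_eq_Icc]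
  rfl

lemma inv_factorial_succ_mul (j : ℕ) : ((j + 1)! : ℚ)⁻¹ * (j + 1) = (j ! : ℚ)⁻¹ := by
  rw [Nat.factorial_succ]; push_cast; field_simp

/-- `(e^t - T_{N-1}(t)) / t^N` -/
noncomputable def shiftedExp (N : ℕ) : ℚ⟦X⟧ := PowerSeries.mk fun j => ((j + N)! : ℚ)⁻¹

lemma X_pow_mul_shiftedExp (N : ℕ) :
    PowerSeries.X ^ N * shiftedExp N
      = PowerSeries.mk fun j => if N ≤ j then (j ! : ℚ)⁻¹ else 0 := by
  ext j
  rw [PowerSeries.coeff_X_pow_mul', shiftedExp, coeff_mk, coeff_mk]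
  split_ifs with h
  · rw [Nat.sub_add_cancel h]
  · rfl

lemma constantCoeff_shiftedExp (N : ℕ) :
    PowerSeries.constantCoeff (shiftedExp N) = (N ! : ℚ)⁻¹ := by
  simp [shiftedExp, ← coeff_zero_eq_constantCoeff_apply]

lemma shiftedExp_ne_zero (N : ℕ) : shiftedExp N ≠ 0 := fun h => by
  have h0 := constantCoeff_shiftedExp N
  rw [h, map_zero, eq_comm, _root_.inv_eq_zero] at h0
  exact N.factorial_ne_zero (mod_cast h0)

lemma X_mul_derivative_shiftedExp (N : ℕ) :
    PowerSeries.X * d⁄dX ℚ (shiftedExp N) = PowerSeries.X * shiftedExp N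
      - PowerSeries.C (N : ℚ) * shiftedExp N + PowerSeries.C ((N : ℚ) * (N ! : ℚ)⁻¹) := by
  ext (_ | i)
  · simp [shiftedExp]
  · simp only [coeff_succ_X_mul, PowerSeries.coeff_derivative, map_add, map_sub,
      PowerSeries.coeff_C_mul, PowerSeries.coeff_C, shiftedExp, coeff_mk, Nat.succ_ne_zero]
    rw [← inv_factorial_succ_mul (i + N), show i + 1 + N = i + N + 1 by ring]
    push_cast
    ring

lemma mul_shiftedExp_eq_C {N : ℕ} {F : ℚ⟦X⟧}
    (hF : F * (PowerSeries.mk fun j => if N ≤ j then ((j.factorial : ℚ))⁻¹ else 0)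
        = PowerSeries.mk fun j => if j = N then ((N.factorial : ℚ))⁻¹ else 0) :
    F * shiftedExp N = PowerSeries.C (N ! : ℚ)⁻¹ := by
  have hX : (PowerSeries.X : ℚ⟦X⟧) ^ N ≠ 0 := pow_ne_zero _ PowerSeries.X_ne_zero
  refine mul_left_cancel₀ hX ?_
  rw [mul_left_comm, X_pow_mul_shiftedExp, hF, mul_comm]
  ext j
  rw [PowerSeries.coeff_C_mul_X_pow, coeff_mk]

lemma X_mul_derivative_eq_of_mul_shiftedExp {N : ℕ} {F : ℚ⟦X⟧}
    (hF : F * shiftedExp N = PowerSeries.C (N ! : ℚ)⁻¹) :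
    PowerSeries.X * d⁄dX ℚ F
      = PowerSeries.C (N : ℚ) * F - PowerSeries.X * F - PowerSeries.C (N : ℚ) * F ^ 2 := by
  have hD : d⁄dX ℚ F * shiftedExp N + F * d⁄dX ℚ (shiftedExp N) = 0 := by
    simpa [Derivation.leibniz, add_comm, mul_comm] using congrArg (d⁄dX ℚ) hF
  have hE := X_mul_derivative_shiftedExp N
  rw [map_mul] at hE
  refine mul_right_cancel₀ (shiftedExp_ne_zero N) ?_
  linear_combination PowerSeries.X * hD - F * hE + PowerSeries.C (N : ℚ) * F * hF

lemma coeff_zero_eq_one_of_mul_shiftedExp {N : ℕ} {F : ℚ⟦X⟧}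
    (hF : F * shiftedExp N = PowerSeries.C (N ! : ℚ)⁻¹) : PowerSeries.coeff 0 F = 1 := by
  rw [PowerSeries.coeff_zero_eq_constantCoeff_apply]
  have h := congrArg PowerSeries.constantCoeff hF
  rw [map_mul, constantCoeff_shiftedExp, PowerSeries.constantCoeff_C] at h
  exact (mul_eq_right₀ (by positivity)).1 h

lemma coeff_one_eq_of_riccati {N : ℕ} {F : ℚ⟦X⟧} (h0 : PowerSeries.coeff 0 F = 1)
    (hF : PowerSeries.X * d⁄dX ℚ F
      = PowerSeries.C (N : ℚ) * F - PowerSeries.X * F - PowerSeries.C (N : ℚ) * F ^ 2) :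
    PowerSeries.coeff 1 F = -((N : ℚ) + 1)⁻¹ := by
  have h : PowerSeries.coeff 1 F
      = N * PowerSeries.coeff 1 F - 1 - N * (PowerSeries.coeff 1 F + PowerSeries.coeff 1 F) := by
    simpa [pow_two, PowerSeries.coeff_mul, Finset.Nat.antidiagonal_succ, h0,
      PowerSeries.coeff_derivative, -map_natCast] using congrArg (PowerSeries.coeff 1) hF
  field_simp
  linear_combination h

/-- `e^{xt}`, as a power series in `t` over `ℚ[x]`. -/
noncomputable def expXt : (ℚ[X])⟦X⟧ :=
  PowerSeries.mk fun m => (m ! : ℚ)⁻¹ • Polynomial.X ^ m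

lemma derivative_coeff_zero_expXt :
    Polynomial.derivative (PowerSeries.coeff 0 expXt) = 0 := by
  simp [expXt]

lemma derivative_coeff_succ_expXt (j : ℕ) :
    Polynomial.derivative (PowerSeries.coeff (j + 1) expXt) = PowerSeries.coeff j expXt := by
  simp only [expXt, coeff_mk, Polynomial.derivative_smul, Polynomial.derivative_X_pow,
    Nat.add_sub_cancel, Polynomial.C_mul', smul_smul]
  push_cast
  rw [inv_factorial_succ_mul]

lemma derivative_expXt : d⁄dX ℚ[X] expXt = PowerSeries.C Polynomial.X * expXt := by
  refine PowerSeries.ext fun j => ?_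
  rw [PowerSeries.coeff_derivative, PowerSeries.coeff_C_mul, expXt, coeff_mk, coeff_mk,
    ← Nat.cast_succ, ← nsmul_eq_mul', ← Nat.cast_smul_eq_nsmul ℚ, smul_smul]
  push_cast
  rw [mul_comm, inv_factorial_succ_mul, mul_smul_comm, pow_succ']

section MapCMulExpXt

variable (H : ℚ⟦X⟧)

lemma derivative_coeff_zero_map_C_mul_expXt :
    Polynomial.derivative (PowerSeries.coeff 0 (PowerSeries.map Polynomial.C H * expXt)) = 0 := by
  rw [PowerSeries.coeff_mul, Finset.Nat.antidiagonal_zero, sum_singleton, PowerSeries.coeff_map,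
    Polynomial.derivative_C_mul, derivative_coeff_zero_expXt, mul_zero]

lemma derivative_coeff_succ_map_C_mul_expXt (j : ℕ) :
    Polynomial.derivative (PowerSeries.coeff (j + 1) (PowerSeries.map Polynomial.C H * expXt))
      = PowerSeries.coeff j (PowerSeries.map Polynomial.C H * expXt) := by
  rw [PowerSeries.coeff_mul, PowerSeries.coeff_mul, Finset.Nat.sum_antidiagonal_succ', map_add,
    map_sum]
  simp only [PowerSeries.coeff_map, Polynomial.derivative_C_mul, derivative_coeff_zero_expXt,
    derivative_coeff_succ_expXt, mul_zero, zero_add]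

lemma iterate_derivative_coeff_map_C_mul_expXt (j k : ℕ) :
    Polynomial.derivative^[k] (PowerSeries.coeff (j + k) (PowerSeries.map Polynomial.C H * expXt))
      = PowerSeries.coeff j (PowerSeries.map Polynomial.C H * expXt) := by
  induction k with
  | zero => rfl
  | succ k ih =>
    rw [Function.iterate_succ_apply, ← add_assoc, derivative_coeff_succ_map_C_mul_expXt, ih]

lemma coeff_X_mul_map_C_mul_expXt (n : ℕ) :
    PowerSeries.coeff n (PowerSeries.X * (PowerSeries.map Polynomial.C H * expXt))
      = Polynomial.derivative (PowerSeries.coeff n (PowerSeries.map Polynomial.C H * expXt)) := by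
  cases n with
  | zero => rw [derivative_coeff_zero_map_C_mul_expXt, PowerSeries.coeff_zero_X_mul]
  | succ m => rw [coeff_succ_X_mul, derivative_coeff_succ_map_C_mul_expXt]

lemma coeff_map_C_mul_map_C_mul_expXt (F : ℚ⟦X⟧) (n : ℕ) :
    PowerSeries.coeff n
        (PowerSeries.map Polynomial.C F * (PowerSeries.map Polynomial.C H * expXt))
      = ∑ k ∈ range (n + 1), PowerSeries.coeff k F • Polynomial.derivative^[k]
          (PowerSeries.coeff n (PowerSeries.map Polynomial.C H * expXt)) := by
  rw [PowerSeries.coeff_mul, Finset.Nat.sum_antidiagonal_eq_sum_range_succ_mk]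
  refine Finset.sum_congr rfl fun k hk => ?_
  have hkn := Nat.sub_add_cancel (Finset.mem_range_succ_iff.1 hk)
  rw [PowerSeries.coeff_map, Polynomial.C_mul', ← hkn, iterate_derivative_coeff_map_C_mul_expXt,
    hkn]

end MapCMulExpXt

lemma coeff_map_C_pow_mul_expXt_recurrence {N r : ℕ} {F : ℚ⟦X⟧}
    (hF : PowerSeries.X * d⁄dX ℚ F
      = PowerSeries.C (N : ℚ) * F - PowerSeries.X * F - PowerSeries.C (N : ℚ) * F ^ 2) {n : ℕ}
    {u : ℚ[X]} (hu : PowerSeries.coeff n (PowerSeries.map Polynomial.C F ^ r * expXt) = u) :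
    (n : ℚ) • u = (r : ℚ) • ((N : ℚ) • u - Polynomial.derivative u
        - (N : ℚ) • ∑ k ∈ range (n + 1),
            PowerSeries.coeff k F • Polynomial.derivative^[k] u)
      + Polynomial.X * Polynomial.derivative u := by
  have hFX := congrArg (PowerSeries.map Polynomial.C) hF
  simp only [map_sub, map_mul, map_pow, PowerSeries.map_X, PowerSeries.map_C,
    PowerSeries.map_derivative] at hFX
  have h := congrArg (PowerSeries.coeff n) (X_mul_derivative_pow_mul hFX derivative_expXt r)
  rw [← map_pow] at h hu
  simp only [PowerSeries.coeff_X_mul_derivative_s5, map_add, map_nsmul, map_sub,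
    PowerSeries.coeff_C_mul, coeff_X_mul_map_C_mul_expXt, coeff_map_C_mul_map_C_mul_expXt,
    hu] at h
  simpa only [← Polynomial.C_eq_natCast, Polynomial.C_mul', ← Nat.cast_smul_eq_nsmul ℚ]
    using h

lemma hypergeometric_ode_of_recurrence {N r n : ℕ} (hN : N ≠ 0) (hr : r ≠ 0) {c : ℕ → ℚ}
    (hc0 : c 0 = 1) (hc1 : c 1 = -((N : ℚ) + 1)⁻¹) {u : ℚ[X]}
    (h : (n : ℚ) • u = (r : ℚ) • ((N : ℚ) • u - Polynomial.derivative u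
        - (N : ℚ) • ∑ k ∈ range (n + 1), c k • Polynomial.derivative^[k] u)
      + Polynomial.X * Polynomial.derivative u) (a : ℚ) :
    ∑ k ∈ Icc 2 n, Polynomial.C (c k) * Polynomial.derivative^[k] (a • u)
      - (Polynomial.C (((r : ℚ) * N)⁻¹) * Polynomial.X
          - Polynomial.C (((N : ℚ) * ((N : ℚ) + 1))⁻¹)) * Polynomial.derivative (a • u)
      + Polynomial.C ((n : ℚ) / ((r : ℚ) * N)) * (a • u) = 0 := by
  simp only [Polynomial.iterate_derivative_smul, Polynomial.derivative_smul, mul_smul_comm,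
    ← Finset.smul_sum]
  cases n with
  | zero =>
    rw [zero_add, Finset.sum_range_one, hc0, Function.iterate_zero, id, one_smul] at h
    have hX : (Polynomial.X - Polynomial.C (r : ℚ)) * Polynomial.derivative u = 0 := by
      simp only [← Polynomial.C_mul', Nat.cast_zero, map_zero] at h
      linear_combination -h
    have hD := (mul_eq_zero.1 hX).resolve_left (Polynomial.X_sub_C_ne_zero _)
    simp [hD]
  | succ m =>
    rw [Finset.sum_range_succ_succ_eq_add_add_sum_Icc, hc0, hc1, Function.iterate_zero, id,
      Function.iterate_one] at h
    simp only [Polynomial.C_mul', sub_mul, smul_mul_assoc]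
    linear_combination (norm := skip) (a * ((r : ℚ) * N)⁻¹) • h
    match_scalars <;> field_simp <;> ring

theorem hypergeometric_bernoulli_differential_equation_general
    (N r n : ℕ) (hN : 1 ≤ N) (hr : 1 ≤ r)
    (F : PowerSeries ℚ)
    (hF : F * (PowerSeries.mk fun j => if N ≤ j then ((j.factorial : ℚ))⁻¹ else 0)
        = PowerSeries.mk fun j => if j = N then ((N.factorial : ℚ))⁻¹ else 0)
    (B : ℕ → ℚ)
    (hB : ∀ m : ℕ, B m = (m.factorial : ℚ) * PowerSeries.coeff m F)
    (Br : ℕ → Polynomial ℚ)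
    (hBr : PowerSeries.mk (fun m => ((m.factorial : ℚ))⁻¹ • Br m)
        = (PowerSeries.map (Polynomial.C : ℚ →+* Polynomial ℚ) F) ^ r
            * PowerSeries.mk (fun m => ((m.factorial : ℚ))⁻¹ • (Polynomial.X : Polynomial ℚ) ^ m)) :
    ∑ k ∈ Finset.Icc 2 n, Polynomial.C (B k / (k.factorial : ℚ))
        * (Polynomial.derivative^[k] (Br n))
      - (Polynomial.C (((r : ℚ) * N)⁻¹) * Polynomial.X
          - Polynomial.C (((N : ℚ) * ((N : ℚ) + 1))⁻¹)) * Polynomial.derivative (Br n)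
      + Polynomial.C ((n : ℚ) / ((r : ℚ) * N)) * Br n = 0 := by
  have hFE := mul_shiftedExp_eq_C hF
  have hRiccati := X_mul_derivative_eq_of_mul_shiftedExp hFE
  have hF0 := coeff_zero_eq_one_of_mul_shiftedExp hFE
  have hcoeff : PowerSeries.coeff n (PowerSeries.map Polynomial.C F ^ r * expXt)
      = (n ! : ℚ)⁻¹ • Br n :=
    (congrArg (PowerSeries.coeff n) hBr).symm.trans (PowerSeries.coeff_mk _ _)
  have hBk : ∀ k, B k / (k ! : ℚ) = PowerSeries.coeff k F := fun k => by
    rw [hB, mul_div_cancel_left₀ _ (by positivity)]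
  simp only [hBk]
  rw [← smul_inv_smul₀ (show (n ! : ℚ) ≠ 0 by positivity) (Br n)]
  exact hypergeometric_ode_of_recurrence (by omega) (by omega) hF0
    (coeff_one_eq_of_riccati hF0 hRiccati) (coeff_map_C_pow_mul_expXt_recurrence hRiccati hcoeff) _

/-- Theorem 4: the higher order hypergeometric Bernoulli polynomial `y = B_{N,n}^{(r)}(x)`
satisfies the differential equation
`(B_{N,n}/n!) y⁽ⁿ⁾ + ⋯ + (B_{N,2}/2!) y'' - (x/(rN) - 1/(N(N+1))) y' + (n/(rN)) y = 0`.
Here `F` is the exponential generating function of the hypergeometric Bernoulli numbers,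
i.e. the unique power series with `F·(e^t - T_{N-1}(t)) = t^N/N!`, the numbers `B m = B_{N,m}`
are its scaled coefficients, and `Br m = B_{N,m}^{(r)}(x)` is the family of polynomials whose
exponential generating function is `F^r · e^{xt}`. -/
theorem hypergeometric_bernoulli_differential_equation
    (N r n : ℕ) (hN : 1 ≤ N) (hr : 1 ≤ r) (hn : 1 ≤ n)
    (F : PowerSeries ℚ)
    (hF : F * (PowerSeries.mk fun j => if N ≤ j then ((j.factorial : ℚ))⁻¹ else 0)
        = PowerSeries.mk fun j => if j = N then ((N.factorial : ℚ))⁻¹ else 0)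
    (B : ℕ → ℚ)
    (hB : ∀ m : ℕ, B m = (m.factorial : ℚ) * PowerSeries.coeff m F)
    (Br : ℕ → Polynomial ℚ)
    (hBr : PowerSeries.mk (fun m => ((m.factorial : ℚ))⁻¹ • Br m)
        = (PowerSeries.map (Polynomial.C : ℚ →+* Polynomial ℚ) F) ^ r
            * PowerSeries.mk (fun m => ((m.factorial : ℚ))⁻¹ • (Polynomial.X : Polynomial ℚ) ^ m)) :
    ∑ k ∈ Finset.Icc 2 n, Polynomial.C (B k / (k.factorial : ℚ))
        * (Polynomial.derivative^[k] (Br n))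
      - (Polynomial.C (((r : ℚ) * N)⁻¹) * Polynomial.X
          - Polynomial.C (((N : ℚ) * ((N : ℚ) + 1))⁻¹)) * Polynomial.derivative (Br n)
      + Polynomial.C ((n : ℚ) / ((r : ℚ) * N)) * Br n = 0 :=
  hypergeometric_bernoulli_differential_equation_general N r n hN hr F hF B hB Br hBr
end

section
/- Let n ≥ 1 be an integer and let y = B_n(x) ∈ ℚ[x] be the n-th Bernoulli polynomial. Then y satisfies the differential equation ∑_{k=2}^{n} (B_k/k!) · y^{(k)}(x) − (x − 1/2) · y′(x) + n · y(x) = 0, i.e. (B_n/n!) y^{(n)} + (B_{n−1}/(n−1)!) y^{(n−1)} + ⋯ + (B_2/2!) y″ − (x − 1/2) y′ + n y = 0 as an identity of polynomials in ℚ[x], where B_k denotes the k-th Bernoulli number. -/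
/-!
Write `E_n` for the left-hand side. Since `B_{n+1}' = (n+1) B_n`, differentiating gives
`E_{n+1}' = (n+1) E_n`, so inductively every `E_n` is a constant, namely `∫₀¹ E_n`. That integral
vanishes: `∫₀¹ B_m = 0` for `m ≥ 1`, so of the sum only the `k = n` term survives, contributing
`B_n`, and integrating by parts gives `∫₀¹ (x - 1/2) B_n'(x) dx = B_n` as well.
-/

open Finset Polynomial

namespace Polynomial

variable {K : Type*} [Field K]

/-- `p ↦ ∫₀¹ p(x) dx`, computed coefficientwise as `Xⁱ ↦ 1 / (i + 1)`. -/
noncomputable def integralZeroOne : K[X] →ₗ[K] K :=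
  lsum fun i => (i + 1 : K)⁻¹ • LinearMap.id

@[simp]
theorem integralZeroOne_monomial (i : ℕ) (a : K) :
    integralZeroOne (monomial i a) = a / (i + 1) := by
  simp [integralZeroOne, div_eq_inv_mul]

@[simp]
theorem integralZeroOne_C (a : K) : integralZeroOne (C a) = a := by
  simp [← monomial_zero_left]

@[simp]
theorem integralZeroOne_C_mul (a : K) (p : K[X]) :
    integralZeroOne (C a * p) = a * integralZeroOne p := by
  rw [← smul_eq_C_mul, map_smul, smul_eq_mul]

theorem integralZeroOne_derivative [CharZero K] (p : K[X]) :
    integralZeroOne (derivative p) = p.eval 1 - p.eval 0 := by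
  induction p using Polynomial.induction_on' with
  | add p q hp hq => simp only [map_add, hp, hq, eval_add]; ring
  | monomial n a =>
    cases n with
    | zero => simp
    | succ n =>
      rw [derivative_monomial_succ, integralZeroOne_monomial]
      simp [mul_div_assoc, div_self (Nat.cast_add_one_ne_zero (R := K) n)]

theorem eq_zero_of_derivative_eq_zero_of_integralZeroOne_eq_zero [CharZero K] {p : K[X]}
    (hd : derivative p = 0) (hp : integralZeroOne p = 0) : p = 0 := by
  rw [eq_C_of_derivative_eq_zero hd] at hp ⊢
  rw [integralZeroOne_C] at hp
  rw [hp, map_zero]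

theorem iterate_derivative_bernoulli (n k : ℕ) :
    derivative^[k] (bernoulli n) = C (n.descFactorial k : ℚ) * bernoulli (n - k) := by
  induction k with
  | zero => simp
  | succ k ih =>
    rw [Function.iterate_succ_apply', ih, derivative_C_mul, derivative_bernoulli,
      Nat.sub_sub, Nat.descFactorial_succ, ← C_eq_natCast, ← mul_assoc, ← map_mul, Nat.cast_mul,
      mul_comm ((n - k : ℕ) : ℚ)]

theorem iterate_derivative_bernoulli_eq_zero {n k : ℕ} (h : n < k) :
    derivative^[k] (bernoulli n) = 0 := by
  rw [iterate_derivative_bernoulli, Nat.descFactorial_eq_zero_iff_lt.mpr h]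
  simp

theorem integralZeroOne_bernoulli (n : ℕ) :
    integralZeroOne (bernoulli n) = if n = 0 then 1 else 0 := by
  split_ifs with hn
  · rw [hn, bernoulli_zero, ← C_1, integralZeroOne_C]
  · have h := integralZeroOne_derivative (bernoulli (n + 1))
    rw [derivative_bernoulli_add_one, ← Nat.cast_add_one, ← C_eq_natCast,
      integralZeroOne_C_mul, bernoulli_eval_one, bernoulli_eval_zero,
      bernoulli_eq_bernoulli'_of_ne_one (by omega), sub_self] at h
    exact (mul_eq_zero.mp h).resolve_left (by positivity)

theorem integralZeroOne_X_sub_C_mul_derivative [CharZero K] (c : K) (p : K[X]) :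
    integralZeroOne ((X - C c) * derivative p)
      = (1 - c) * p.eval 1 + c * p.eval 0 - integralZeroOne p := by
  have h : (X - C c) * derivative p = derivative ((X - C c) * p) - p := by
    simp [derivative_mul]
  rw [h, map_sub, integralZeroOne_derivative]
  simp only [eval_mul, eval_sub, eval_X, eval_C]
  ring

noncomputable def bernoulliODEResidual (n : ℕ) : ℚ[X] :=
  ∑ k ∈ Icc 2 n, C (_root_.bernoulli k / k.factorial) * derivative^[k] (bernoulli n)
    - (X - C (1 / 2)) * derivative (bernoulli n) + C (n : ℚ) * bernoulli n

theorem bernoulliODEResidual_one : bernoulliODEResidual 1 = 0 := by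
  simp [bernoulliODEResidual, bernoulli_one]

theorem derivative_bernoulliODEResidual_succ (n : ℕ) :
    derivative (bernoulliODEResidual (n + 1)) = C (n + 1 : ℚ) * bernoulliODEResidual n := by
  have hd : derivative (bernoulli (n + 1)) = C (n + 1 : ℚ) * bernoulli n := by
    rw [derivative_bernoulli_add_one, ← Nat.cast_add_one, ← C_eq_natCast, Nat.cast_add_one]
  have hsum : ∑ k ∈ Icc 2 (n + 1),
        C (_root_.bernoulli k / k.factorial) * derivative^[k] (bernoulli n)
      = ∑ k ∈ Icc 2 n, C (_root_.bernoulli k / k.factorial) * derivative^[k] (bernoulli n) := by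
    refine (sum_subset (Icc_subset_Icc_right n.le_succ) fun k hk hkn => ?_).symm
    rw [iterate_derivative_bernoulli_eq_zero (by simp only [mem_Icc] at hk hkn; omega), mul_zero]
  simp only [bernoulliODEResidual, derivative_add, derivative_sub, derivative_sum, derivative_C_mul,
    ← Function.iterate_succ_apply' derivative, Function.iterate_succ_apply, hd, iterate_derivative_C_mul]
  rw [← hsum, derivative_mul, derivative_C_mul]
  simp only [mul_left_comm (C (_root_.bernoulli _ / _)), ← mul_sum]
  simp only [derivative_sub, derivative_X, derivative_C, sub_zero, one_mul, Nat.cast_add_one,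
    map_add, map_one]
  ring

theorem integralZeroOne_bernoulliODEResidual {n : ℕ} (hn : 2 ≤ n) :
    integralZeroOne (bernoulliODEResidual n) = 0 := by
  have hsum : ∑ k ∈ Icc 2 n, integralZeroOne
      (C (_root_.bernoulli k / k.factorial) * derivative^[k] (bernoulli n)) = _root_.bernoulli n := by
    rw [sum_eq_single_of_mem n (mem_Icc.mpr ⟨hn, le_rfl⟩)]
    · rw [integralZeroOne_C_mul, iterate_derivative_bernoulli, integralZeroOne_C_mul,
        integralZeroOne_bernoulli, if_pos n.sub_self, Nat.descFactorial_self, mul_one,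
        div_mul_cancel₀ _ (by positivity)]
    · intro k hk hkn
      rw [integralZeroOne_C_mul, iterate_derivative_bernoulli, integralZeroOne_C_mul,
        integralZeroOne_bernoulli, if_neg (by simp only [mem_Icc] at hk; omega), mul_zero, mul_zero]
  rw [bernoulliODEResidual, map_add, map_sub, map_sum, hsum, integralZeroOne_X_sub_C_mul_derivative,
    integralZeroOne_C_mul, integralZeroOne_bernoulli, bernoulli_eval_one, bernoulli_eval_zero,
    ← bernoulli_eq_bernoulli'_of_ne_one (by omega), if_neg (by omega)]
  ring

theorem bernoulliODEResidual_eq_zero (n : ℕ) : bernoulliODEResidual n = 0 := by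
  induction n with
  | zero => simp [bernoulliODEResidual]
  | succ n ih =>
    rcases n with _ | n
    · exact bernoulliODEResidual_one
    · refine eq_zero_of_derivative_eq_zero_of_integralZeroOne_eq_zero ?_ ?_
      · rw [derivative_bernoulliODEResidual_succ, ih, mul_zero]
      · exact integralZeroOne_bernoulliODEResidual (by omega)

end Polynomial

theorem bernoulli_polynomial_differential_equation_general (n : ℕ) :
    ∑ k ∈ Finset.Icc 2 n, Polynomial.C (_root_.bernoulli k / (k.factorial : ℚ))
        * (Polynomial.derivative^[k] (Polynomial.bernoulli n))
      - (Polynomial.X - Polynomial.C ((1 : ℚ) / 2))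
          * Polynomial.derivative (Polynomial.bernoulli n)
      + Polynomial.C (n : ℚ) * Polynomial.bernoulli n = 0 :=
  bernoulliODEResidual_eq_zero n

/-- He–Ricci: the Bernoulli polynomial `y = B_n(x)` satisfies the differential equation
`(B_n/n!) y⁽ⁿ⁾ + (B_{n-1}/(n-1)!) y⁽ⁿ⁻¹⁾ + ⋯ + (B_2/2!) y'' - (x - 1/2) y' + n y = 0`,
where `B_k` is the `k`-th Bernoulli number. -/
theorem bernoulli_polynomial_differential_equation (n : ℕ) (hn : 1 ≤ n) :
    ∑ k ∈ Finset.Icc 2 n, Polynomial.C (_root_.bernoulli k / (k.factorial : ℚ))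
        * (Polynomial.derivative^[k] (Polynomial.bernoulli n))
      - (Polynomial.X - Polynomial.C ((1 : ℚ) / 2))
          * Polynomial.derivative (Polynomial.bernoulli n)
      + Polynomial.C (n : ℚ) * Polynomial.bernoulli n = 0 :=
  bernoulli_polynomial_differential_equation_general n
end

section
/- Let n ≥ 2 be an integer. Then the Bernoulli polynomials satisfy the recurrence B_n(x) = (x − 1/2) · B_{n−1}(x) − (1/n) · ∑_{k=0}^{n−2} C(n, k) · B_{n−k} · B_k(x) as an identity of polynomials in ℚ[x], where B_{n−k} denotes the (n−k)-th Bernoulli number. -/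
/-!
The polynomials `Tₙ = ∑ₖ C(n,k) B_{n-k} Bₖ(x)` and `Rₙ = n (x - 1) B_{n-1}(x) - (n - 1) Bₙ(x)`
are both Appell sequences (`p'ₙ = n pₙ₋₁`), with `T₀ = R₀ = 1` and the same jumps
`pₙ(1) - pₙ(0) = n B_{n-1}`, because `Bₖ(1) - Bₖ(0)` vanishes except at `k = 1`. An Appell
sequence is determined by `p₀` and these jumps, so `Tₙ = Rₙ`; splitting off the terms
`k = n - 1, n` of `Tₙ` gives the recurrence.
-/

open Finset Polynomial

namespace Polynomial

variable {R : Type*}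

section Semiring

variable [Semiring R] {p : ℕ → R[X]}

/-- Appell sequences, without the usual normalisation `p 0 ≠ 0`; at `n = 0` the condition says
that `p 0` is constant. -/
def IsAppell (p : ℕ → R[X]) : Prop :=
  ∀ n, derivative (p n) = n • p (n - 1)

theorem IsAppell.derivative_zero (hp : IsAppell p) : derivative (p 0) = 0 := by
  rw [hp 0, zero_smul]

theorem IsAppell.derivative_succ (hp : IsAppell p) (n : ℕ) :
    derivative (p (n + 1)) = (n + 1) • p n :=
  hp (n + 1)

end Semiring

section Ring

variable [Ring R] {p q : ℕ → R[X]}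

theorem IsAppell.sub (hp : IsAppell p) (hq : IsAppell q) : IsAppell (p - q) := fun n => by
  simp only [Pi.sub_apply, derivative_sub, hp n, hq n, smul_sub]

variable [IsAddTorsionFree R]

theorem eq_C_mul_X_add_C_of_derivative_eq_C {f : R[X]} {a : R} (h : derivative f = C a) :
    f = C a * X + C (f.coeff 0) := by
  have hconst : derivative (f - C a * X) = 0 := by simp [h]
  simpa [sub_eq_iff_eq_add'] using eq_C_of_derivative_eq_zero hconst

/-- A constant `p (n + 1) = C c` forces `p (n + 2) = C ((n + 2) • c) * X + C e`, whose values at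
`0` and `1` differ unless `c = 0`. -/
theorem IsAppell.eq_zero_of_eval_one_eq_eval_zero (hp : IsAppell p) (h0 : p 0 = 0)
    (hΔ : ∀ n, (p n).eval 1 = (p n).eval 0) : p = 0 := by
  funext n
  induction n with
  | zero => exact h0
  | succ n ih =>
    set c := (p (n + 1)).coeff 0
    have hconst : p (n + 1) = C c :=
      eq_C_of_derivative_eq_zero (by rw [hp.derivative_succ, ih, Pi.zero_apply, smul_zero])
    have hlin : p (n + 1 + 1) = C ((n + 2) • c) * X + C ((p (n + 1 + 1)).coeff 0) :=
      eq_C_mul_X_add_C_of_derivative_eq_C (by rw [hp.derivative_succ, hconst, smul_C])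
    have hc : (n + 2) • c = 0 := by
      have := hΔ (n + 1 + 1)
      rw [hlin] at this
      simpa only [eval_add, eval_C_mul, eval_C, eval_X, mul_one, mul_zero, zero_add,
        add_eq_right] using this
    rw [hconst, (nsmul_eq_zero_iff_right (by omega)).mp hc, C_0, Pi.zero_apply]

theorem IsAppell.eq_of_eval_one_sub_eval_zero (hp : IsAppell p) (hq : IsAppell q)
    (h0 : p 0 = q 0) (hΔ : ∀ n, (p n).eval 1 - (p n).eval 0 = (q n).eval 1 - (q n).eval 0) :
    p = q :=
  sub_eq_zero.mp <| (hp.sub hq).eq_zero_of_eval_one_eq_eval_zero (sub_eq_zero.mpr h0) fun n => by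
    simp only [Pi.sub_apply, eval_sub]
    exact sub_eq_sub_iff_sub_eq_sub.mp (hΔ n)

end Ring

theorem IsAppell.binomialConvolution [CommSemiring R] {p : ℕ → R[X]} (hp : IsAppell p)
    (a : ℕ → R) :
    IsAppell fun n => ∑ k ∈ range (n + 1), C ((n.choose k : R) * a (n - k)) * p k := by
  rintro (_ | m)
  · simp [hp.derivative_zero]
  rw [derivative_sum, sum_range_succ']
  simp only [derivative_C_mul, hp.derivative_succ, hp.derivative_zero, mul_zero, add_zero,
    Nat.add_sub_cancel, smul_sum]
  refine sum_congr rfl fun k _ => ?_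
  have hchoose : ((m + 1).choose (k + 1) : R) * (k + 1) = (m + 1) * m.choose k := by
    simpa using congrArg (Nat.cast : ℕ → R) (Nat.add_one_mul_choose_eq m k).symm
  rw [Nat.add_sub_add_right, nsmul_eq_mul, nsmul_eq_mul, ← C_eq_natCast, ← C_eq_natCast]
  simp only [← mul_assoc, ← C_mul]
  congr 2
  push_cast
  rw [mul_right_comm, hchoose]

theorem isAppell_bernoulli : IsAppell bernoulli := fun n => by
  rw [derivative_bernoulli, nsmul_eq_mul]

theorem bernoulli_eval_one_sub_eval_zero (n : ℕ) :
    (bernoulli n).eval 1 - (bernoulli n).eval 0 = if n = 1 then 1 else 0 := by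
  rw [← zero_add 1, add_comm, bernoulli_eval_one_add, add_sub_cancel_left]
  rcases n with _ | _ | n <;> simp

noncomputable def bernoulliSelfConvolution (n : ℕ) : ℚ[X] :=
  ∑ k ∈ range (n + 1), C ((n.choose k : ℚ) * _root_.bernoulli (n - k)) * bernoulli k

theorem isAppell_bernoulliSelfConvolution : IsAppell bernoulliSelfConvolution :=
  isAppell_bernoulli.binomialConvolution _root_.bernoulli

theorem eval_one_sub_eval_zero_bernoulliSelfConvolution (n : ℕ) :
    (bernoulliSelfConvolution n).eval 1 - (bernoulliSelfConvolution n).eval 0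
      = n * _root_.bernoulli (n - 1) := by
  simp only [bernoulliSelfConvolution, eval_finsetSum, eval_mul, eval_C, ← sum_sub_distrib,
    ← mul_sub, bernoulli_eval_one_sub_eval_zero, mul_ite, mul_one, mul_zero, sum_ite_eq',
    mem_range]
  rcases n with _ | n <;> simp

theorem bernoulliSelfConvolution_eq (n : ℕ) :
    bernoulliSelfConvolution n
      = (n : ℚ[X]) * (X - 1) * bernoulli (n - 1) - ((n : ℚ[X]) - 1) * bernoulli n := by
  have hR : IsAppell fun n : ℕ =>
      (n : ℚ[X]) * (X - 1) * bernoulli (n - 1) - ((n : ℚ[X]) - 1) * bernoulli n := by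
    rintro (_ | m)
    · simp
    simp only [derivative_sub, derivative_mul, derivative_bernoulli, derivative_natCast,
      derivative_X, derivative_one, nsmul_eq_mul, Nat.add_sub_cancel]
    push_cast
    ring
  refine congrFun (isAppell_bernoulliSelfConvolution.eq_of_eval_one_sub_eval_zero hR
    (by simp [bernoulliSelfConvolution]) fun n => ?_) n
  rw [eval_one_sub_eval_zero_bernoulliSelfConvolution]
  have hjump : ((n : ℚ) - 1) * (if n = 1 then 1 else 0) = 0 := by split_ifs <;> simp [*]
  have hΔ := bernoulli_eval_one_sub_eval_zero n
  simp only [eval_sub, eval_mul, eval_natCast, eval_X, eval_one, bernoulli_eval_zero] at hΔ ⊢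
  linear_combination ((n : ℚ) - 1) * hΔ + hjump

end Polynomial

/-- He–Ricci: the Bernoulli polynomials satisfy the recurrence
`B_n(x) = (x - 1/2)·B_{n-1}(x) - (1/n)·∑_{k=0}^{n-2} C(n,k)·B_{n-k}·B_k(x)` for `n ≥ 2`,
where `B_{n-k}` is the `(n-k)`-th Bernoulli number. -/
theorem bernoulli_polynomial_recurrence (n : ℕ) (hn : 2 ≤ n) :
    Polynomial.bernoulli n
      = (Polynomial.X - Polynomial.C ((1 : ℚ) / 2)) * Polynomial.bernoulli (n - 1)
        - Polynomial.C ((n : ℚ))⁻¹ *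
            ∑ k ∈ Finset.range (n - 1),
              Polynomial.C ((n.choose k : ℚ) * _root_.bernoulli (n - k))
                * Polynomial.bernoulli k := by
  have h1 : 1 ≤ n := by omega
  have hT := bernoulliSelfConvolution_eq n
  rw [bernoulliSelfConvolution, show n + 1 = n - 1 + 1 + 1 by omega, sum_range_succ,
    sum_range_succ, Nat.sub_add_cancel h1, Nat.choose_symm h1, Nat.choose_one_right,
    Nat.sub_sub_self h1, Nat.choose_self, Nat.sub_self, _root_.bernoulli_one,
    _root_.bernoulli_zero, Nat.cast_one, mul_one, C_1, one_mul, C_mul, map_natCast] at hT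
  have hinv : C ((n : ℚ))⁻¹ * n = 1 := by
    rw [← map_natCast C, ← C_mul, inv_mul_cancel₀ (by positivity), C_1]
  have hhalf : C (-1 / 2 : ℚ) = C (1 / 2) - 1 := by
    rw [← C_1, ← C_sub]; norm_num
  rw [hhalf] at hT
  linear_combination
    C ((n : ℚ))⁻¹ * hT + ((X - C (1 / 2)) * bernoulli (n - 1) - bernoulli n) * hinv
end

section
/- Let N ≥ 1 be an integer and let F_N(t) ∈ ℚ⟦t⟧ be the unique formal power series with F_N(t)·(e^t − T_{N−1}(t)) = t^N/N!, where T_{N−1}(t) = ∑_{j=0}^{N−1} t^j/j! and e^t = ∑_{j≥0} t^j/j! in ℚ⟦t⟧. Then t · F_N′(t) = N·F_N(t) − t·F_N(t) − N·F_N(t)², where F_N′ denotes the formal derivative of F_N. -/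
/-!
With `G = e^t − T_{N−1}(t)` and `H = t^N/N!`, the Euler operator `θ = t·d/dt` satisfies
`θ G = t·G + N·H` and `θ H = N·H`. Applying `θ` to `F·G = H` and multiplying by `F` gives
`H·(θ F + t·F + N·F²) = N·F·H`, and `H ≠ 0` may be cancelled in the domain `ℚ⟦t⟧`.
-/

open PowerSeries
open scoped Nat

theorem Derivation.apply_eq_riccati_of_mul_eq {R A : Type*} [CommSemiring R] [CommRing A]
    [IsDomain A] [Algebra R A] (D : Derivation R A A) {F G H u c : A} (hFG : F * G = H)
    (hH : H ≠ 0) (hG : D G = u * G + c * H) (hD : D H = c * H) :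
    D F = c * F - u * F - c * F ^ 2 := by
  have hleib : F * D G + G * D F = D H := by
    rw [← hFG, Derivation.leibniz, smul_eq_mul, smul_eq_mul]
  rw [hG, hD] at hleib
  apply mul_left_cancel₀ hH
  linear_combination F * hleib - (D F + u * F) * hFG

namespace PowerSeries

section Euler

variable (R : Type*) [CommSemiring R]

noncomputable def eulerDerivation : Derivation R R⟦X⟧ R⟦X⟧ := (X : R⟦X⟧) • d⁄dX R

variable {R}

theorem eulerDerivation_apply (f : R⟦X⟧) : eulerDerivation R f = X * d⁄dX R f := rfl

theorem coeff_eulerDerivation (f : R⟦X⟧) (n : ℕ) :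
    coeff n (eulerDerivation R f) = n * coeff n f := by
  rcases n with _ | n
  · simp [eulerDerivation_apply]
  · rw [eulerDerivation_apply, coeff_succ_X_mul, coeff_derivative]
    push_cast
    ring

theorem eulerDerivation_monomial (n : ℕ) (a : R) :
    eulerDerivation R (monomial n a) = (n : R⟦X⟧) * monomial n a := by
  ext m
  rw [coeff_eulerDerivation, ← map_natCast (C (R := R)), coeff_C_mul, coeff_monomial]
  split_ifs with h <;> simp [h]

end Euler

section ExpTail

variable (K : Type*) [Field K]

/-- `e^t − T_{N−1}(t)`. -/
noncomputable def expTail (N : ℕ) : K⟦X⟧ := mk fun j => if N ≤ j then (j ! : K)⁻¹ else 0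

variable {K} [CharZero K]

theorem eulerDerivation_expTail (N : ℕ) :
    eulerDerivation K (expTail K N) = X * expTail K N + (N : K⟦X⟧) * monomial N (N ! : K)⁻¹ := by
  ext n
  rw [coeff_eulerDerivation, map_add, ← map_natCast (C (R := K)), coeff_C_mul, coeff_monomial]
  rcases n with _ | n
  · rcases N with _ | N <;> simp [expTail]
  · rw [coeff_succ_X_mul]
    simp only [expTail, coeff_mk]
    have hfact : ((n : K) + 1) * ((n + 1)! : K)⁻¹ = (n ! : K)⁻¹ := by
      rw [Nat.factorial_succ]
      push_cast
      field_simp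
    rcases lt_trichotomy (n + 1) N with h | rfl | h
    · simp [show ¬N ≤ n + 1 by omega, show ¬N ≤ n by omega, h.ne]
    · simp
    · simp [show N ≤ n + 1 by omega, show N ≤ n by omega, h.ne', hfact]

end ExpTail

end PowerSeries

theorem hypergeometric_bernoulli_egf_derivative_general
    (N : ℕ) (F : PowerSeries ℚ)
    (hF : F * (PowerSeries.mk fun j => if N ≤ j then ((j.factorial : ℚ))⁻¹ else 0)
        = PowerSeries.mk fun j => if j = N then ((N.factorial : ℚ))⁻¹ else 0) :
    PowerSeries.X * (d⁄dX ℚ F)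
      = (N : ℚ) • F - PowerSeries.X * F - (N : ℚ) • (F ^ 2) := by
  rw [← monomial_eq_mk] at hF
  have hH : monomial N (N ! : ℚ)⁻¹ ≠ 0 := fun h ↦ by
    simpa [Nat.factorial_ne_zero] using congrArg (coeff N) h
  have h := (eulerDerivation ℚ).apply_eq_riccati_of_mul_eq hF hH (eulerDerivation_expTail N)
    (eulerDerivation_monomial N _)
  simpa only [eulerDerivation_apply, smul_eq_C_mul, map_natCast] using h

/-- Lemma 1(i): for the exponential generating function `F = F_N(t)` of the hypergeometric
Bernoulli numbers, i.e. the unique power series with `F·(e^t - T_{N-1}(t)) = t^N/N!`,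
one has `t·F' = N·F - t·F - N·F²`, where `F'` is the formal derivative. -/
theorem hypergeometric_bernoulli_egf_derivative
    (N : ℕ) (hN : 1 ≤ N) (F : PowerSeries ℚ)
    (hF : F * (PowerSeries.mk fun j => if N ≤ j then ((j.factorial : ℚ))⁻¹ else 0)
        = PowerSeries.mk fun j => if j = N then ((N.factorial : ℚ))⁻¹ else 0) :
    PowerSeries.X * (d⁄dX ℚ F)
      = (N : ℚ) • F - PowerSeries.X * F - (N : ℚ) • (F ^ 2) :=
  hypergeometric_bernoulli_egf_derivative_general N F hF
end
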